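/- Let S and A be C*-algebras with A unital, and let ω : S → A be a continuous linear map which is A-positive definite with respect to the multiplicative *-semigroup structure of S. Then ω(s⋆) = ω(s)⋆ for all s ∈ S, and for all n : ℕ, s : Fin n → S, a : Fin n → A one has ∑_{i,j} (a i)⋆ * ω(s i)⋆ * ω(s j) * (a j) ≤ ‖ω‖ • ∑_{i,j} (a i)⋆ * ω((s i)⋆ * (s j)) * (a j), where ‖ω‖ is the operator norm of ω. In particular ω has the extension property. -/

import Mathlib

/-!
Taking `n = 1` in positive definiteness shows `ω (q⋆ q) ≥ 0`, so `ω` is a positive map and hence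
Hermitian. Now extend the family `s` by an element `e` of an increasing approximate unit of `S` and
the coefficients `a` by an arbitrary `b ∈ A`. Since `ω (e⋆ e) ≤ ‖ω‖` and `ω (e⋆ x) → ω x`, letting
`e → 1` gives `0 ≤ G + X⋆ b + b⋆ X + ‖ω‖ • b⋆ b`, where `G = ∑ aᵢ⋆ ω (sᵢ⋆ sⱼ) aⱼ` and
`X = ∑ ω (sⱼ) aⱼ`. Completing the square with `b = -‖ω‖⁻¹ • X` yields `X⋆ X ≤ ‖ω‖ • G`, and `X⋆ X`
is the left-hand side of the inequality.
-/

open Filter Topology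

def gramSum {S A : Type*} [Mul S] [Star S] [NonUnitalSemiring A] [Star A]
    (ω : S → A) {n : ℕ} (s : Fin n → S) (a : Fin n → A) : A :=
  ∑ i, ∑ j, star (a i) * ω (star (s i) * s j) * a j

def IsPositiveDefinite {S A : Type*} [Mul S] [Star S] [NonUnitalSemiring A] [Star A] [LE A]
    (ω : S → A) : Prop :=
  ∀ (n : ℕ) (s : Fin n → S) (a : Fin n → A), 0 ≤ gramSum ω s a

theorem gramSum_snoc {S A : Type*} [Mul S] [Star S] [NonUnitalSemiring A] [Star A] (ω : S → A)
    {n : ℕ} (s : Fin n → S) (a : Fin n → A) (e : S) (b : A) :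
    gramSum ω (Fin.snoc s e) (Fin.snoc a b) =
      gramSum ω s a + ∑ i, star (a i) * ω (star (s i) * e) * b +
        ∑ j, star b * ω (star e * s j) * a j + star b * ω (star e * e) * b := by
  simp only [gramSum, Fin.sum_univ_castSucc, Fin.snoc_castSucc, Fin.snoc_last,
    Finset.sum_add_distrib]
  abel

theorem IsPositiveDefinite.map_star_mul_self_nonneg {S A : Type*} [Mul S] [Star S]
    [Semiring A] [StarRing A] [PartialOrder A] {ω : S → A} (hω : IsPositiveDefinite ω) (q : S) :
    0 ≤ ω (star q * q) := by
  simpa [gramSum] using hω 1 ![q] ![1]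

theorem IsPositiveDefinite.map_nonneg {S A F : Type*} [NonUnitalSemiring S] [PartialOrder S]
    [StarRing S] [StarOrderedRing S] [Semiring A] [StarRing A] [PartialOrder A]
    [IsOrderedAddMonoid A] [FunLike F S A] [AddMonoidHomClass F S A] {ω : F}
    (hω : IsPositiveDefinite ω) {p : S} (hp : 0 ≤ p) : 0 ≤ ω p := by
  rw [StarOrderedRing.nonneg_iff] at hp
  induction hp using AddSubmonoid.closure_induction with
  | mem x hx => obtain ⟨q, rfl⟩ := hx; exact hω.map_star_mul_self_nonneg q
  | zero => simp
  | add x y _ _ hx hy => rw [map_add]; exact add_nonneg hx hy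

theorem IsPositiveDefinite.map_star {S A F : Type*} [NonUnitalRing S] [PartialOrder S]
    [StarRing S] [StarOrderedRing S] [Module ℂ S] [StarModule ℂ S] [SelfAdjointDecompose S]
    [Ring A] [StarRing A] [PartialOrder A] [StarOrderedRing A] [Module ℂ A] [StarModule ℂ A]
    [FunLike F S A] [LinearMapClass F ℂ S A] {ω : F} (hω : IsPositiveDefinite ω) (s : S) :
    ω (star s) = star (ω s) :=
  StarHomClass.map_star (PositiveLinearMap.mk₀ (ω : S →ₗ[ℂ] A) fun _ ↦ hω.map_nonneg) s

theorem star_sum_mul_mul_sum {A : Type*} [NonUnitalSemiring A] [StarRing A] {n : ℕ}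
    (x a : Fin n → A) :
    star (∑ i, x i * a i) * ∑ j, x j * a j = ∑ i, ∑ j, star (a i) * star (x i) * x j * a j := by
  simp only [star_sum, star_mul, Finset.sum_mul_sum, mul_assoc]

theorem star_mul_self_le_smul_of_forall_nonneg {A : Type*} [NonUnitalRing A] [StarRing A]
    [PartialOrder A] [IsOrderedAddMonoid A] [Module ℝ A] [StarModule ℝ A] [SMulCommClass ℝ A A]
    [IsScalarTower ℝ A A] [PosSMulMono ℝ A] {G X : A} {c : ℝ} (hc : 0 < c)
    (h : ∀ b, 0 ≤ G + star X * b + star b * X + c • (star b * b)) : star X * X ≤ c • G := by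
  have hb := h (-c⁻¹ • X)
  have hsquare : G + star X * (-c⁻¹ • X) + star (-c⁻¹ • X) * X +
      c • (star (-c⁻¹ • X) * (-c⁻¹ • X)) = G - c⁻¹ • (star X * X) := by
    rw [star_smul, star_trivial (-c⁻¹), mul_smul_comm, smul_mul_assoc, mul_smul_comm,
      smul_mul_assoc, smul_smul, smul_smul]
    field_simp
    module
  rw [hsquare, sub_nonneg] at hb
  calc star X * X = c • c⁻¹ • (star X * X) := by
        rw [smul_smul, mul_inv_cancel₀ hc.ne', one_smul]
    _ ≤ c • G := smul_le_smul_of_nonneg_left hb hc.le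

open CStarAlgebra in
theorem tendsto_star_mul_approximateUnit {S : Type*} [NonUnitalCStarAlgebra S] [PartialOrder S]
    [StarOrderedRing S] (x : S) : Tendsto (fun e ↦ star e * x) (approximateUnit S) (𝓝 x) := by
  have hl := increasingApproximateUnit S
  refine (hl.tendsto_mul_right x).congr' ?_
  filter_upwards [hl.eventually_star_eq] with e he
  rw [he]

section CStarAlgebra

open CStarAlgebra

variable {S A : Type*} [NonUnitalCStarAlgebra S] [CStarAlgebra A] [PartialOrder A]
  [StarOrderedRing A] {ω : S →L[ℂ] A}

theorem IsPositiveDefinite.star_left_conjugate_map_star_mul_self_le (hω : IsPositiveDefinite ω)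
    {e : S} (he : ‖e‖ ≤ 1) (b : A) : star b * ω (star e * e) * b ≤ ‖ω‖ • (star b * b) := by
  calc star b * ω (star e * e) * b ≤ ‖ω (star e * e)‖ • (star b * b) :=
        star_left_conjugate_le_norm_smul (hω.map_star_mul_self_nonneg e).isSelfAdjoint
    _ ≤ ‖ω‖ • (star b * b) := by
        gcongr
        · exact star_mul_self_nonneg b
        calc ‖ω (star e * e)‖ ≤ ‖ω‖ * ‖star e * e‖ := ω.le_opNorm _
          _ ≤ ‖ω‖ * 1 := by
            gcongr
            rw [CStarRing.norm_star_mul_self]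
            exact mul_le_one₀ he (norm_nonneg e) he
          _ = ‖ω‖ := mul_one _

variable [PartialOrder S] [StarOrderedRing S]

theorem IsPositiveDefinite.gramSum_add_cross_terms_nonneg (hω : IsPositiveDefinite ω) {n : ℕ}
    (s : Fin n → S) (a : Fin n → A) (b : A) :
    0 ≤ gramSum ω s a + star (∑ j, ω (s j) * a j) * b + star b * ∑ j, ω (s j) * a j +
      ‖ω‖ • (star b * b) := by
  set X := ∑ j, ω (s j) * a j
  set C : S → A := fun e ↦ ∑ j, star b * ω (star e * s j) * a j
  have hC : Tendsto C (approximateUnit S) (𝓝 (star b * X)) := by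
    simp only [C, X, Finset.mul_sum, ← mul_assoc]
    refine tendsto_finsetSum _ fun j _ ↦ ?_
    exact ((ω.continuous.tendsto _ |>.comp (tendsto_star_mul_approximateUnit (s j))).const_mul
      _).mul_const _
  have hC_star : ∀ e, ∑ i, star (a i) * ω (star (s i) * e) * b = star (C e) := by
    intro e
    simp only [C, star_sum, star_mul, star_star, ← hω.map_star, mul_assoc]
  have hev : ∀ᶠ e in approximateUnit S,
      0 ≤ gramSum ω s a + star (C e) + C e + ‖ω‖ • (star b * b) := by
    filter_upwards [(increasingApproximateUnit S).eventually_norm] with e he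
    calc 0 ≤ gramSum ω (Fin.snoc s e) (Fin.snoc a b) := hω _ _ _
      _ = gramSum ω s a + star (C e) + C e + star b * ω (star e * e) * b := by
        rw [gramSum_snoc, hC_star]
      _ ≤ _ := by gcongr; exact hω.star_left_conjugate_map_star_mul_self_le he b
  have hlim : Tendsto (fun e ↦ gramSum ω s a + star (C e) + C e + ‖ω‖ • (star b * b))
      (approximateUnit S) (𝓝 (gramSum ω s a + star X * b + star b * X + ‖ω‖ • (star b * b))) := by
    simpa only [star_mul, star_star] using
      ((tendsto_const_nhds.add hC.star).add hC).add tendsto_const_nhds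
  exact ge_of_tendsto hlim hev

end CStarAlgebra

/-- A continuous linear `A`-positive definite map `ω` between C*-algebras, with
`A` unital, is Hermitian and satisfies
`∑ (a i)⋆ ω(s i)⋆ ω(s j) (a j) ≤ ‖ω‖ • ∑ (a i)⋆ ω((s i)⋆ (s j)) (a j)`;
in particular it has the extension property. -/
theorem cstar_extension_property
    {S : Type*} [NonUnitalCStarAlgebra S] [PartialOrder S] [StarOrderedRing S]
    {A : Type*} [CStarAlgebra A] [PartialOrder A] [StarOrderedRing A]
    (ω : S →L[ℂ] A)
    (hpd : ∀ (n : ℕ) (s : Fin n → S) (a : Fin n → A),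
      0 ≤ ∑ i, ∑ j, star (a i) * ω (star (s i) * s j) * a j) :
    (∀ s : S, ω (star s) = star (ω s)) ∧
    (∀ (n : ℕ) (s : Fin n → S) (a : Fin n → A),
      ∑ i, ∑ j, star (a i) * star (ω (s i)) * ω (s j) * a j ≤
        ‖ω‖ • ∑ i, ∑ j, star (a i) * ω (star (s i) * s j) * a j) := by
  have hω : IsPositiveDefinite ω := hpd
  refine ⟨hω.map_star, fun n s a ↦ ?_⟩
  rw [← star_sum_mul_mul_sum]
  rcases (norm_nonneg ω).eq_or_lt with hzero | hpos
  · rw [eq_comm, norm_eq_zero] at hzero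
    subst hzero
    simp
  · exact star_mul_self_le_smul_of_forall_nonneg hpos (hω.gramSum_add_cross_terms_nonneg s a)
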